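/- arXiv:2212.07777 — 2 statements merged into one kernel-verified Lean document; each statement's English description precedes it below -/
import Mathlib

section
/- Let B be a symmetric non-degenerate bilinear form on a finite-dimensional F_q-vector space V, let U ≤ V be a self-orthogonal subspace of dimension r, and let k ≥ r. Then the quotient map π : U^⊥ → U^⊥/U induces a bijection between {C ≤ V : dim C = k, U ≤ C, C self-orthogonal with respect to B} and {C̃ ≤ U^⊥/U : dim C̃ = k − r, C̃ self-orthogonal with respect to B_U}. -/
/-!
A self-orthogonal `C ⊇ U` lies in `U^⊥`, and subspaces `C` with `U ≤ C ≤ U^⊥` correspond to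
subspaces of `U^⊥/U` by taking images and preimages under the quotient map. Dimensions drop by
`dim U`, and since `B_U` is computed on representatives, `C` is self-orthogonal iff its image is.
-/

open Module Submodule LinearMap

namespace Submodule

variable {R M : Type*} [Ring R] [AddCommGroup M] [Module R M] (W U : Submodule R M)

def subquotientMap (C : Submodule R M) : Submodule R (W ⧸ U.comap W.subtype) :=
  (C.comap W.subtype).map (U.comap W.subtype).mkQ

def subquotientComap (D : Submodule R (W ⧸ U.comap W.subtype)) : Submodule R M :=
  (D.comap (U.comap W.subtype).mkQ).map W.subtype

variable {W U}

theorem subquotientComap_subquotientMap {C : Submodule R M} (hUC : U ≤ C) (hCW : C ≤ W) :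
    subquotientComap W U (subquotientMap W U C) = C := by
  have hker : U.comap W.subtype ≤ C.comap W.subtype := comap_mono hUC
  rw [subquotientMap, subquotientComap, comap_map_eq, ker_mkQ, sup_eq_left.mpr hker,
    map_comap_subtype, inf_eq_right.mpr hCW]

theorem subquotientMap_subquotientComap (D : Submodule R (W ⧸ U.comap W.subtype)) :
    subquotientMap W U (subquotientComap W U D) = D := by
  rw [subquotientMap, subquotientComap, comap_map_eq, ker_subtype, sup_bot_eq,
    map_comap_eq_of_surjective (mkQ_surjective _)]

theorem le_subquotientComap (hUW : U ≤ W) (D : Submodule R (W ⧸ U.comap W.subtype)) :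
    U ≤ subquotientComap W U D := fun x hx =>
  ⟨⟨x, hUW hx⟩, (ker_mkQ _).ge.trans (ker_le_comap _) hx, rfl⟩

theorem finrank_comap_mkQ {K M : Type*} [DivisionRing K] [AddCommGroup M] [Module K M]
    [FiniteDimensional K M] (p : Submodule K M) (D : Submodule K (M ⧸ p)) :
    finrank K (D.comap p.mkQ) = finrank K D + finrank K p := by
  have hrange : range (p.mkQ.domRestrict (D.comap p.mkQ)) = D := by
    rw [range_domRestrict, map_comap_eq_of_surjective (mkQ_surjective p)]
  have hker : finrank K (ker (p.mkQ.domRestrict (D.comap p.mkQ))) = finrank K p := by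
    rw [ker_domRestrict, ker_mkQ]
    exact (comapSubtypeEquivOfLe ((ker_mkQ p).ge.trans (ker_le_comap _))).finrank_eq
  rw [← finrank_range_add_finrank_ker (p.mkQ.domRestrict (D.comap p.mkQ)), hrange, hker]

theorem finrank_subquotientComap {K M : Type*} [DivisionRing K] [AddCommGroup M] [Module K M]
    [FiniteDimensional K M] {W U : Submodule K M} (hUW : U ≤ W)
    (D : Submodule K (W ⧸ U.comap W.subtype)) :
    finrank K (subquotientComap W U D) = finrank K D + finrank K U := by
  rw [subquotientComap, finrank_map_subtype_eq, finrank_comap_mkQ,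
    (comapSubtypeEquivOfLe hUW).finrank_eq]

end Submodule

namespace LinearMap.BilinForm

variable {R M N : Type*} [CommRing R] [AddCommGroup M] [Module R M] [AddCommGroup N] [Module R N]

theorem map_le_orthogonal_map_iff (B : LinearMap.BilinForm R M) (f : N →ₗ[R] M)
    (C : Submodule R N) :
    C.map f ≤ B.orthogonal (C.map f) ↔ ∀ x ∈ C, ∀ y ∈ C, B (f x) (f y) = 0 := by
  constructor
  · intro h x hx y hy
    exact h (mem_map_of_mem hy) (f x) (mem_map_of_mem hx)
  · rintro h _ ⟨y, hy, rfl⟩ _ ⟨x, hx, rfl⟩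
    exact h x hx y hy

theorem subquotientComap_le_orthogonal_iff {B : LinearMap.BilinForm R M} {W U : Submodule R M}
    {B' : LinearMap.BilinForm R (W ⧸ U.comap W.subtype)}
    (hB' : ∀ v w : W, B' (Submodule.Quotient.mk v) (Submodule.Quotient.mk w) = B (v : M) (w : M))
    (D : Submodule R (W ⧸ U.comap W.subtype)) :
    subquotientComap W U D ≤ B.orthogonal (subquotientComap W U D) ↔ D ≤ B'.orthogonal D := by
  conv_rhs => rw [← map_comap_eq_of_surjective (mkQ_surjective (U.comap W.subtype)) D]
  rw [subquotientComap, map_le_orthogonal_map_iff, map_le_orthogonal_map_iff]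
  simp only [mkQ_apply, hB', subtype_apply]

end LinearMap.BilinForm

theorem stmt6_general {F V : Type*} [Field F] [AddCommGroup V] [Module F V]
    [FiniteDimensional F V]
    (B : LinearMap.BilinForm F V)
    (U : Submodule F V) (hU : U ≤ B.orthogonal U)
    (r k : ℕ) (hr : Module.finrank F U = r) (hk : r ≤ k)
    (B' : LinearMap.BilinForm F
      ((B.orthogonal U) ⧸ (U.comap (B.orthogonal U).subtype)))
    (hB' : ∀ v w : B.orthogonal U,
      B' (Submodule.Quotient.mk v) (Submodule.Quotient.mk w) = B (v : V) (w : V)) :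
    Set.BijOn
      (fun C : Submodule F V =>
        Submodule.map (U.comap (B.orthogonal U).subtype).mkQ
          (C.comap (B.orthogonal U).subtype))
      {C : Submodule F V | Module.finrank F C = k ∧ U ≤ C ∧ C ≤ B.orthogonal C}
      {D | Module.finrank F D = k - r ∧ D ≤ B'.orthogonal D} := by
  have hsub : ∀ C : Submodule F V, U ≤ C → C ≤ B.orthogonal C → C ≤ B.orthogonal U :=
    fun C hUC hCC => hCC.trans (BilinForm.orthogonal_le hUC)
  refine Set.InvOn.bijOn (f' := subquotientComap (B.orthogonal U) U)
    ⟨fun C ⟨_, hUC, hCC⟩ => subquotientComap_subquotientMap hUC (hsub C hUC hCC),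
      fun D _ => subquotientMap_subquotientComap D⟩ ?_ ?_
  · rintro C ⟨hCk, hUC, hCC⟩
    have hC := subquotientComap_subquotientMap hUC (hsub C hUC hCC)
    rw [← hC, finrank_subquotientComap hU, hr] at hCk
    rw [← hC, BilinForm.subquotientComap_le_orthogonal_iff hB'] at hCC
    exact ⟨Nat.eq_sub_of_add_eq hCk, hCC⟩
  · rintro D ⟨hDk, hDD⟩
    refine ⟨?_, le_subquotientComap hU D,
      (BilinForm.subquotientComap_le_orthogonal_iff hB' D).2 hDD⟩
    rw [finrank_subquotientComap hU, hDk, hr]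
    omega

theorem stmt6 {F V : Type*} [Field F] [Fintype F] [AddCommGroup V] [Module F V]
    [FiniteDimensional F V]
    (B : LinearMap.BilinForm F V) (hsymm : B.IsSymm) (hnd : B.Nondegenerate)
    (U : Submodule F V) (hU : U ≤ B.orthogonal U)
    (r k : ℕ) (hr : Module.finrank F U = r) (hk : r ≤ k)
    (B' : LinearMap.BilinForm F
      ((B.orthogonal U) ⧸ (U.comap (B.orthogonal U).subtype)))
    (hB' : ∀ v w : B.orthogonal U,
      B' (Submodule.Quotient.mk v) (Submodule.Quotient.mk w) = B (v : V) (w : V)) :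
    Set.BijOn
      (fun C : Submodule F V =>
        Submodule.map (U.comap (B.orthogonal U).subtype).mkQ
          (C.comap (B.orthogonal U).subtype))
      {C : Submodule F V | Module.finrank F C = k ∧ U ≤ C ∧ C ≤ B.orthogonal C}
      {D | Module.finrank F D = k - r ∧ D ≤ B'.orthogonal D} :=
  stmt6_general B U hU r k hr hk B' hB'
end

section
/- Let q and n be even, and let B be the standard inner product on F_q^n. For any self-orthogonal subspace U ≤ F_q^n, the induced form B_U on U^⊥/U is alternating if and only if the all-one vector 1 belongs to U. -/
/-!
In characteristic 2 squaring is additive, so `v ⬝ᵥ v = (∑ i, v i)² = (v ⬝ᵥ 1)²`: the induced form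
is alternating exactly when `1` is orthogonal to all of `U^⊥`, i.e. when `1 ∈ U^⊥⊥ = U`.
-/

open Matrix LinearMap

section DotProductOrthogonal

variable {ι K : Type*} [Fintype ι] [Field K]

theorem dotProductBilin_isRefl :
    BilinForm.IsRefl (dotProductBilin K K : LinearMap.BilinForm K (ι → K)) :=
  fun v w h => by rwa [dotProductBilin_apply_apply, dotProduct_comm] at h

theorem dotProductBilin_nondegenerate :
    (dotProductBilin K K : LinearMap.BilinForm K (ι → K)).Nondegenerate :=
  (IsRefl.nondegenerate_iff_separatingLeft (dotProductBilin_isRefl (ι := ι) (K := K))).mpr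
    fun _ hv => dotProduct_eq_zero_iff.mp hv

theorem Submodule.mem_of_forall_orthogonal_dotProduct_eq_zero (W : Submodule K (ι → K))
    {x : ι → K} (hx : ∀ v, (∀ u ∈ W, v ⬝ᵥ u = 0) → v ⬝ᵥ x = 0) : x ∈ W := by
  rw [← BilinForm.orthogonal_orthogonal dotProductBilin_nondegenerate dotProductBilin_isRefl W]
  intro v hv
  exact hx v fun u hu => dotProductBilin_isRefl u v (hv u hu)

end DotProductOrthogonal

theorem dotProduct_self_eq_sq_dotProduct_one {ι R : Type*} [Fintype ι] [CommSemiring R]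
    [CharP R 2] (v : ι → R) : v ⬝ᵥ v = (v ⬝ᵥ 1) ^ 2 := by
  rw [dotProduct_one, sum_pow_char]
  simp only [dotProduct, sq]

theorem dotProduct_self_eq_zero_iff_dotProduct_one {ι R : Type*} [Fintype ι] [CommSemiring R]
    [IsReduced R] [CharP R 2] (v : ι → R) : v ⬝ᵥ v = 0 ↔ v ⬝ᵥ 1 = 0 := by
  rw [dotProduct_self_eq_sq_dotProduct_one, pow_eq_zero_iff two_ne_zero]

theorem FiniteField.charP_two_of_even_card {F : Type*} [Field F] [Fintype F]
    (hq : Even (Fintype.card F)) : CharP F 2 :=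
  ringChar.of_eq (even_card_iff_char_two.mpr (Nat.even_iff.mp hq))

theorem stmt8_general {F : Type*} [Field F] [Fintype F] (n : ℕ)
    (hq : Even (Fintype.card F))
    (U : Submodule F (Fin n → F)) :
    (∀ v : Fin n → F, (∀ u ∈ U, ∑ i, v i * u i = 0) → ∑ i, v i * v i = 0) ↔
      (fun _ : Fin n => (1 : F)) ∈ U := by
  have := FiniteField.charP_two_of_even_card hq
  refine ⟨fun h => ?_, fun h1 v hv => ?_⟩
  · exact U.mem_of_forall_orthogonal_dotProduct_eq_zero fun v hv =>
      (dotProduct_self_eq_zero_iff_dotProduct_one v).mp (h v hv)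
  · exact (dotProduct_self_eq_zero_iff_dotProduct_one v).mpr (hv 1 h1)

theorem stmt8 {F : Type*} [Field F] [Fintype F] (n : ℕ)
    (hq : Even (Fintype.card F)) (hn : Even n)
    (U : Submodule F (Fin n → F))
    (hU : ∀ u ∈ U, ∀ w ∈ U, ∑ i, u i * w i = 0) :
    (∀ v : Fin n → F, (∀ u ∈ U, ∑ i, v i * u i = 0) → ∑ i, v i * v i = 0) ↔
      (fun _ : Fin n => (1 : F)) ∈ U :=
  stmt8_general n hq U
end
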